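/- arXiv:2201.05998 — 2 statements merged into one kernel-verified Lean document; each statement's English description precedes it below -/
import Mathlib

section
/- The unique solution (ℓ, m) of the system ℓ(t) = ∫ₜ^∞ λe^{−λs} ds + ∫₀ᵗ λe^{−λs} m(t−s) ds, m(t) = ∫ₜ^∞ λe^{−λs} ds + 2∫₀ᵗ λe^{−λs} m(t−s) ds is given by ℓ(t) = cosh(λt) and m(t) = e^{λt}. -/
/-!
The substitution `s ↦ t - s` turns the convolution into `e^{-λt} F(t)` with
`F(t) = ∫₀ᵗ λ e^{λu} m(u) du`, so the equation for `m` becomes the linear ODE `F' = λ (1 + 2F)`,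
`F(0) = 0`. Hence `F(t) = (e^{2λt} - 1) / 2`, from which `m` and `ℓ` are read off.
-/

open MeasureTheory Real Set intervalIntegral

theorem integral_Ioi_exp_density {lam : ℝ} (hlam : 0 < lam) (t : ℝ) :
    ∫ s in Ioi t, lam * exp (-lam * s) = exp (-lam * t) := by
  rw [MeasureTheory.integral_const_mul, integral_exp_mul_Ioi (by linarith)]
  field_simp

theorem integral_exp_density_mul_comp_sub (lam t : ℝ) (m : ℝ → ℝ) :
    ∫ s in (0 : ℝ)..t, lam * exp (-lam * s) * m (t - s)
      = exp (-lam * t) * ∫ u in (0 : ℝ)..t, lam * exp (lam * u) * m u := by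
  have hkernel : ∀ s, lam * exp (-lam * s) * m (t - s)
      = exp (-lam * t) * (lam * exp (lam * (t - s)) * m (t - s)) := fun s => by
    rw [← mul_assoc, mul_left_comm, ← exp_add]
    ring_nf
  simp_rw [hkernel, intervalIntegral.integral_const_mul, integral_comp_sub_left
    (fun u => lam * exp (lam * u) * m u), sub_self, sub_zero]

theorem eq_mul_exp_of_hasDerivAt_eq_mul {f : ℝ → ℝ} {b : ℝ}
    (hf : ∀ x, 0 ≤ x → HasDerivAt f (b * f x) x) {t : ℝ} (ht : 0 ≤ t) :
    f t = f 0 * exp (b * t) := by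
  set G : ℝ → ℝ := fun x => exp (-b * x) * f x
  have hG : ∀ x, 0 ≤ x → HasDerivAt G 0 x := fun x hx => by
    refine (((hasDerivAt_id x).const_mul (-b)).exp.mul (hf x hx)).congr_deriv ?_
    simp only [id_eq]
    ring
  have hG_const := constant_of_has_deriv_right_zero
    (fun x hx => (hG x hx.1).continuousAt.continuousWithinAt)
    (fun x hx => (hG x hx.1).hasDerivWithinAt) t ⟨ht, le_rfl⟩
  simp only [G, mul_zero, exp_zero, one_mul] at hG_const
  rw [← hG_const, mul_right_comm, ← exp_add]
  simp

theorem integral_mul_exp_eq_of_renewal {lam : ℝ} {m : ℝ → ℝ} (hm : ContinuousOn m (Ici 0))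
    (hrenew : ∀ t, 0 ≤ t →
      m t = exp (-lam * t) * (1 + 2 * ∫ u in (0 : ℝ)..t, lam * exp (lam * u) * m u))
    {t : ℝ} (ht : 0 ≤ t) :
    ∫ u in (0 : ℝ)..t, lam * exp (lam * u) * m u = (exp (2 * lam * t) - 1) / 2 := by
  -- extend `m` continuously to the left of `0`, so that the primitive is differentiable at `0`
  set g : ℝ → ℝ := fun u => lam * exp (lam * u) * m (max u 0)
  have hg : Continuous g := by
    have : Continuous fun u : ℝ => m (max u 0) :=
      hm.comp_continuous (continuous_id.max continuous_const) fun u => le_max_right u 0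
    exact (continuous_const.mul (continuous_exp.comp (continuous_const.mul continuous_id))).mul this
  set F : ℝ → ℝ := fun t => ∫ u in (0 : ℝ)..t, g u
  have hF : ∀ t, 0 ≤ t → ∫ u in (0 : ℝ)..t, lam * exp (lam * u) * m u = F t := fun t ht =>
    integral_congr fun u hu => by
      rw [uIcc_of_le ht] at hu
      simp only [g, max_eq_left hu.1]
  have hg_eq : ∀ x, 0 ≤ x → g x = 2 * lam * (F x + 1 / 2) := fun x hx => by
    have hexp : exp (lam * x) * exp (-lam * x) = 1 := by rw [← exp_add]; simp
    simp only [g, max_eq_left hx]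
    rw [hrenew x hx, hF x hx]
    linear_combination lam * (1 + 2 * F x) * hexp
  have hODE := eq_mul_exp_of_hasDerivAt_eq_mul (f := fun t => F t + 1 / 2) (b := 2 * lam)
    (fun x hx => hg_eq x hx ▸ (hg.integral_hasStrictDerivAt 0 x).hasDerivAt.add_const _) ht
  simp only [F, integral_same] at hODE
  rw [hF t ht]
  linarith

theorem mean_tree_size_integral_system_general (lam : ℝ) (hlam : 0 < lam)
    (ℓ m : ℝ → ℝ) (hm : ContinuousOn m (Set.Ici 0))
    (h1 : ∀ t : ℝ, 0 ≤ t →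
      ℓ t = (∫ s in Set.Ioi t, lam * Real.exp (-lam * s))
            + ∫ s in (0:ℝ)..t, lam * Real.exp (-lam * s) * m (t - s))
    (h2 : ∀ t : ℝ, 0 ≤ t →
      m t = (∫ s in Set.Ioi t, lam * Real.exp (-lam * s))
            + 2 * ∫ s in (0:ℝ)..t, lam * Real.exp (-lam * s) * m (t - s)) :
    ∀ t : ℝ, 0 ≤ t → ℓ t = Real.cosh (lam * t) ∧ m t = Real.exp (lam * t) := by
  simp only [integral_Ioi_exp_density hlam, integral_exp_density_mul_comp_sub] at h1 h2
  intro t ht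
  have hF := integral_mul_exp_eq_of_renewal hm (fun s hs => by rw [h2 s hs]; ring) ht
  have hexp : exp (-lam * t) * exp (2 * lam * t) = exp (lam * t) := by
    rw [← exp_add]; ring_nf
  rw [h1 t ht, h2 t ht, hF, cosh_eq, ← neg_mul]
  exact ⟨by linear_combination hexp / 2, by linear_combination hexp⟩

theorem mean_tree_size_integral_system (lam : ℝ) (hlam : 0 < lam)
    (ℓ m : ℝ → ℝ) (hℓ : ContinuousOn ℓ (Set.Ici 0)) (hm : ContinuousOn m (Set.Ici 0))
    (h1 : ∀ t : ℝ, 0 ≤ t →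
      ℓ t = (∫ s in Set.Ioi t, lam * Real.exp (-lam * s))
            + ∫ s in (0:ℝ)..t, lam * Real.exp (-lam * s) * m (t - s))
    (h2 : ∀ t : ℝ, 0 ≤ t →
      m t = (∫ s in Set.Ioi t, lam * Real.exp (-lam * s))
            + 2 * ∫ s in (0:ℝ)..t, lam * Real.exp (-lam * s) * m (t - s)) :
    ∀ t : ℝ, 0 ≤ t → ℓ t = Real.cosh (lam * t) ∧ m t = Real.exp (lam * t) :=
  mean_tree_size_integral_system_general lam hlam ℓ m hm h1 h2
end

section
/- Let K > 0 and T < 1/(K d). If S_Id and S_f are continuous on [0,T] and satisfy S_Id(t) = K + ∫₀ᵗ S_f(s) ds and S_f(t) = K + d∫₀ᵗ S_f(s)² ds, then S_Id(t) = K − (1/d)·log(1 − K t d) ≤ K + (1/d)·log(1/(1 − K T d)) for all t ∈ [0,T]; in particular S_Id is bounded on [0,T]. -/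
/-!
Differentiating the second integral equation shows that `Sf` solves the Riccati problem
`y' = d y²`, `y 0 = K`. Its vector field is locally Lipschitz, hence Lipschitz on the compact range
of any two continuous solutions, so the solution is unique and `Sf` is the explicit solution
`K / (1 - d K t)`, which is finite exactly while `t < 1 / (K d)`. Integrating it gives
`SId t = K + d⁻¹ log (1 / (1 - K d t))`, which is increasing in `t`.
-/

open Set intervalIntegral MeasureTheory

section

variable {E : Type*} [NormedAddCommGroup E] [NormedSpace ℝ E] {a b : ℝ}

theorem hasDerivWithinAt_Ici_of_eq_add_integral [CompleteSpace E] {f F : ℝ → E} {c : E}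
    (hf : ContinuousOn f (Icc a b)) (hF : ∀ t ∈ Icc a b, F t = c + ∫ s in a..t, f s)
    {t : ℝ} (ht : t ∈ Ico a b) : HasDerivWithinAt F (f t) (Ici t) t := by
  have htab : t ∈ Icc a b := Ico_subset_Icc_self ht
  have : Fact (t ∈ Icc a b) := ⟨htab⟩
  have hint : IntervalIntegrable f volume a t :=
    (hf.mono (uIcc_of_le ht.1 ▸ Icc_subset_Icc_right ht.2.le)).intervalIntegrable
  have hderiv : HasDerivWithinAt (fun u => ∫ s in a..u, f s) (f t) (Icc a b) t :=
    integral_hasDerivWithinAt_right hint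
      (hf.stronglyMeasurableAtFilter_nhdsWithin measurableSet_Icc t) (hf t htab)
  exact ((hderiv.const_add c).congr hF (hF t htab)).mono_of_mem_nhdsWithin
    (Icc_mem_nhdsGE_of_mem ht)

theorem ODE_solution_unique_of_locallyLipschitz_right {v : E → E} (hv : LocallyLipschitz v)
    {f g : ℝ → E} (hf : ContinuousOn f (Icc a b))
    (hf' : ∀ t ∈ Ico a b, HasDerivWithinAt f (v (f t)) (Ici t) t)
    (hg : ContinuousOn g (Icc a b))
    (hg' : ∀ t ∈ Ico a b, HasDerivWithinAt g (v (g t)) (Ici t) t)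
    (ha : f a = g a) : EqOn f g (Icc a b) := by
  obtain ⟨L, hL⟩ := (hv.locallyLipschitzOn (s := f '' Icc a b ∪ g '' Icc a b))
    |>.exists_lipschitzOnWith_of_compact
      ((isCompact_Icc.image_of_continuousOn hf).union (isCompact_Icc.image_of_continuousOn hg))
  exact ODE_solution_unique_of_mem_Icc_right (fun _ _ => hL) hf hf'
    (fun t ht => .inl (mem_image_of_mem f (Ico_subset_Icc_self ht))) hg hg'
    (fun t ht => .inr (mem_image_of_mem g (Ico_subset_Icc_self ht))) ha

end

theorem hasDerivAt_div_one_sub_mul (a y₀ t : ℝ) (ht : 1 - a * y₀ * t ≠ 0) :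
    HasDerivAt (fun s => y₀ / (1 - a * y₀ * s)) (a * (y₀ / (1 - a * y₀ * t)) ^ 2) t := by
  have hden : HasDerivAt (fun s => 1 - a * y₀ * s) (-(a * y₀)) t := by
    simpa using ((hasDerivAt_id t).const_mul (a * y₀)).const_sub 1
  refine ((hasDerivAt_const t y₀).div hden ht).congr_deriv ?_
  field_simp
  ring

theorem eqOn_div_one_sub_mul_of_hasDerivWithinAt {a y₀ T : ℝ} {y : ℝ → ℝ}
    (hy : ContinuousOn y (Icc 0 T))
    (hy' : ∀ t ∈ Ico 0 T, HasDerivWithinAt y (a * y t ^ 2) (Ici t) t) (hy₀ : y 0 = y₀)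
    (hT : ∀ t ∈ Icc 0 T, 1 - a * y₀ * t ≠ 0) :
    EqOn y (fun t => y₀ / (1 - a * y₀ * t)) (Icc 0 T) := by
  have hsol : ∀ t ∈ Icc 0 T,
      HasDerivAt (fun s => y₀ / (1 - a * y₀ * s)) (a * (y₀ / (1 - a * y₀ * t)) ^ 2) t :=
    fun t ht => hasDerivAt_div_one_sub_mul a y₀ t (hT t ht)
  refine ODE_solution_unique_of_locallyLipschitz_right (v := fun x => a * x ^ 2)
    (ContDiff.locallyLipschitz (by fun_prop : ContDiff ℝ 1 fun x : ℝ => a * x ^ 2)) hy hy'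
    (fun t ht => (hsol t ht).continuousAt.continuousWithinAt)
    (fun t ht => (hsol t (Ico_subset_Icc_self ht)).hasDerivWithinAt) (by simp [hy₀])

theorem integral_inv_one_sub_mul {c t : ℝ} (hc : c ≠ 0) (ht : 0 < 1 - c * t) :
    ∫ s in 0..t, (1 - c * s)⁻¹ = c⁻¹ * Real.log (1 / (1 - c * t)) := by
  rw [integral_comp_sub_mul (fun x => x⁻¹) hc, mul_zero, sub_zero,
    integral_inv_of_pos ht one_pos, smul_eq_mul]

theorem integral_div_one_sub_mul {a y₀ t : ℝ} (ha : a ≠ 0) (ht : 0 < 1 - a * y₀ * t) :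
    ∫ s in 0..t, y₀ / (1 - a * y₀ * s) = a⁻¹ * Real.log (1 / (1 - a * y₀ * t)) := by
  rcases eq_or_ne y₀ 0 with rfl | hy₀
  · simp
  simp_rw [div_eq_mul_inv y₀, intervalIntegral.integral_const_mul,
    integral_inv_one_sub_mul (mul_ne_zero ha hy₀) ht]
  field_simp

theorem expected_functional_bounded_general (K T : ℝ) (d : ℕ)
    (hT : T < 1 / (K * d))
    (SId Sf : ℝ → ℝ)
    (hSf : ContinuousOn Sf (Set.Icc 0 T))
    (h1 : ∀ t ∈ Set.Icc (0:ℝ) T, SId t = K + ∫ s in (0:ℝ)..t, Sf s)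
    (h2 : ∀ t ∈ Set.Icc (0:ℝ) T, Sf t = K + (d : ℝ) * ∫ s in (0:ℝ)..t, (Sf s) ^ 2) :
    ∀ t ∈ Set.Icc (0:ℝ) T,
      SId t = K - (1 / (d : ℝ)) * Real.log (1 - K * t * d) ∧
      SId t ≤ K + (1 / (d : ℝ)) * Real.log (1 / (1 - K * T * d)) := by
  intro t ht
  have hKd : 0 < K * d := one_div_pos.mp (ht.1.trans_lt (ht.2.trans_lt hT))
  have hpos : ∀ s ∈ Icc 0 T, 0 < 1 - d * K * s := fun s hs => by
    linarith [(lt_div_iff₀ hKd).mp (hs.2.trans_lt hT)]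
  have hSf' : ∀ s ∈ Ico 0 T, HasDerivWithinAt Sf (d * Sf s ^ 2) (Ici s) s := fun s =>
    hasDerivWithinAt_Ici_of_eq_add_integral (f := fun s => d * Sf s ^ 2)
      (continuousOn_const.mul (hSf.pow 2))
      (fun u hu => by rw [h2 u hu, intervalIntegral.integral_const_mul])
  have hSf_eq := eqOn_div_one_sub_mul_of_hasDerivWithinAt hSf hSf'
    (by simpa using h2 0 ⟨le_rfl, ht.1.trans ht.2⟩) (fun s hs => (hpos s hs).ne')
  have hSId : SId t = K + (d : ℝ)⁻¹ * Real.log (1 / (1 - K * t * d)) := by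
    rw [h1 t ht,
      integral_congr fun s hs => hSf_eq (Icc_subset_Icc_right ht.2 (uIcc_of_le ht.1 ▸ hs)),
      integral_div_one_sub_mul (right_ne_zero_of_mul hKd.ne') (hpos t ht)]
    ring_nf
  have hpost : 0 < 1 / (1 - K * t * d) := one_div_pos.mpr (by linarith [hpos t ht])
  have hposT : 0 < 1 - K * T * d := by linarith [hpos T ⟨ht.1.trans ht.2, le_rfl⟩]
  have hmono : K * d * t ≤ K * d * T := mul_le_mul_of_nonneg_left ht.2 hKd.le
  refine ⟨by rw [hSId, one_div, Real.log_inv]; ring, ?_⟩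
  rw [hSId, one_div (d : ℝ)]
  gcongr K + _ * Real.log (1 / ?_)
  linarith

theorem expected_functional_bounded (K T : ℝ) (hK : 0 < K) (d : ℕ) (hd : 1 ≤ d)
    (hT : T < 1 / (K * d))
    (SId Sf : ℝ → ℝ)
    (hSId : ContinuousOn SId (Set.Icc 0 T)) (hSf : ContinuousOn Sf (Set.Icc 0 T))
    (h1 : ∀ t ∈ Set.Icc (0:ℝ) T, SId t = K + ∫ s in (0:ℝ)..t, Sf s)
    (h2 : ∀ t ∈ Set.Icc (0:ℝ) T, Sf t = K + (d : ℝ) * ∫ s in (0:ℝ)..t, (Sf s) ^ 2) :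
    ∀ t ∈ Set.Icc (0:ℝ) T,
      SId t = K - (1 / (d : ℝ)) * Real.log (1 - K * t * d) ∧
      SId t ≤ K + (1 / (d : ℝ)) * Real.log (1 / (1 - K * T * d)) :=
  expected_functional_bounded_general K T d hT SId Sf hSf h1 h2
end
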